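/- Let F be an additive functor from add K to abelian groups, where K is an object of an additive category. Then the map F(K') → Hom_{Γ(K)}(Hom(K', K), F(K)) sending a ∈ F(K') to the Γ(K)-module morphism f ↦ F(f)(a) is an isomorphism for every K' ∈ add K. -/

import Mathlib

set_option linter.unusedSectionVars false

open CategoryTheory Limits

universe w v u

variable {A : Type u} [Category.{v} A] [Preadditive A] [HasFiniteBiproducts A]

/-- `M` belongs to `add K`: it is a direct summand of a finite direct sum of copies of `K`. -/
def InAdd (K M : A) : Prop :=
  ∃ (n : ℕ) (s : M ⟶ ⨁ (fun _ : Fin n => K)) (r : (⨁ fun _ : Fin n => K) ⟶ M),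
    s ≫ r = 𝟙 M

lemma InAdd.self (K : A) : InAdd K K := by
  refine ⟨1, biproduct.ι (fun _ : Fin 1 => K) (0 : Fin 1), biproduct.π (fun _ : Fin 1 => K) 0, ?_⟩
  simp

/-- The full subcategory `add K`. -/
abbrev AddCat (K : A) := ObjectProperty.FullSubcategory (InAdd K)

/-- `K` as an object of `add K`. -/
def KO (K : A) : AddCat K := ⟨K, InAdd.self K⟩

variable (K : A) (F : AddCat K ⥤ AddCommGrpCat.{w}) [F.Additive]

noncomputable instance : SMul (End (KO K)) (F.obj (KO K)) :=
  ⟨fun a x => F.map a x⟩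

lemma FSmul_def (a : End (KO K)) (x : F.obj (KO K)) : a • x = F.map a x := rfl

/-- `F(K)` as a left module over `Γ(K) = End K`. -/
noncomputable instance : Module (End (KO K)) (F.obj (KO K)) where
  one_smul x := by rw [FSmul_def]; show (F.map (𝟙 (KO K))) x = x; simp
  mul_smul a b x := by
    rw [FSmul_def, FSmul_def, FSmul_def]
    show (F.map (b ≫ a)) x = _
    rw [F.map_comp]
    rfl
  smul_add a x y := by rw [FSmul_def, FSmul_def, FSmul_def]; exact map_add _ x y
  smul_zero a := by rw [FSmul_def]; exact map_zero _
  add_smul a b x := by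
    rw [FSmul_def, FSmul_def, FSmul_def, F.map_add]
    rfl
  zero_smul x := by
    rw [FSmul_def, F.map_zero]
    rfl

/-- The map `F(K') → Hom_{Γ(K)}(Hom(K', K), F(K))` sending `a` to the
`Γ(K)`-module morphism `f ↦ F(f)(a)`. -/
noncomputable def evalHom (K' : AddCat K) (a : F.obj K') :
    (K' ⟶ KO K) →ₗ[End (KO K)] F.obj (KO K) where
  toFun f := F.map f a
  map_add' f g := by
    dsimp only
    rw [F.map_add]
    rfl
  map_smul' r f := by
    dsimp only
    show F.map (f ≫ r) a = r • (F.map f a)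
    rw [F.map_comp, FSmul_def]
    rfl

/-!
Every `K' ∈ add K` comes with maps `pᵢ : K' ⟶ K`, `qᵢ : K ⟶ K'` such that `∑ pᵢ ≫ qᵢ = 𝟙 K'`.
Applying the additive functor `F` to this identity gives `a = ∑ F(qᵢ)(F(pᵢ) a)`, so `a` is
recovered from its values `F(pᵢ) a`, and a `Γ(K)`-linear `φ` is the image of
`∑ F(qᵢ)(φ pᵢ)`, because `F(f)(F(qᵢ)(φ pᵢ)) = φ (pᵢ ≫ qᵢ ≫ f)` by linearity.
-/

lemma AddCommGrpCat.sum_apply {X Y : AddCommGrpCat.{w}} {ι : Type*} (t : Finset ι)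
    (g : ι → (X ⟶ Y)) (x : X) : (∑ i ∈ t, g i) x = ∑ i ∈ t, g i x := by
  rw [← AddCommGrpCat.homAddEquiv_apply, map_sum, AddMonoidHom.finsetSum_apply]
  rfl

lemma InAdd.exists_sum_comp_eq_id {K M : A} (h : InAdd K M) :
    ∃ (n : ℕ) (p : Fin n → (M ⟶ K)) (q : Fin n → (K ⟶ M)), ∑ i, p i ≫ q i = 𝟙 M := by
  obtain ⟨n, s, r, hsr⟩ := h
  refine ⟨n, fun i => s ≫ biproduct.π (fun _ : Fin n => K) i,
    fun i => biproduct.ι (fun _ : Fin n => K) i ≫ r, ?_⟩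
  calc _ = s ≫ (∑ i, biproduct.π (fun _ : Fin n => K) i ≫
        biproduct.ι (fun _ : Fin n => K) i) ≫ r := by
        simp only [Preadditive.sum_comp, Preadditive.comp_sum, Category.assoc]
    _ = 𝟙 M := by rw [biproduct.total, Category.id_comp, hsr]

lemma AddCat.exists_sum_comp_eq_id (K' : AddCat K) :
    ∃ (n : ℕ) (p : Fin n → (K' ⟶ KO K)) (q : Fin n → (KO K ⟶ K')), ∑ i, p i ≫ q i = 𝟙 K' := by
  obtain ⟨n, p, q, hpq⟩ := K'.2.exists_sum_comp_eq_id
  refine ⟨n, fun i => ObjectProperty.homMk (p i), fun i => ObjectProperty.homMk (q i), ?_⟩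
  apply (ObjectProperty.ι (InAdd K)).map_injective
  rw [Functor.map_sum]
  exact hpq

section Retract

variable {C : Type*} [Category C] [Preadditive C] (G : C ⥤ AddCommGrpCat.{w}) [G.Additive]
  {X Y : C} {ι : Type*} [Fintype ι] {p : ι → (Y ⟶ X)} {q : ι → (X ⟶ Y)}

lemma eq_sum_map_map_of_sum_comp_eq_id (hpq : ∑ i, p i ≫ q i = 𝟙 Y) (y : G.obj Y) :
    y = ∑ i, G.map (q i) (G.map (p i) y) := by
  have := congrArg (fun g => G.map g y) hpq
  simpa [Functor.map_sum, AddCommGrpCat.sum_apply] using this.symm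

lemma map_sum_map_eq_of_sum_comp_eq_id (hpq : ∑ i, p i ≫ q i = 𝟙 Y)
    (φ : (Y ⟶ X) →+ G.obj X) (hφ : ∀ f g, φ (f ≫ g) = G.map g (φ f)) (f : Y ⟶ X) :
    G.map f (∑ i, G.map (q i) (φ (p i))) = φ f := by
  calc G.map f (∑ i, G.map (q i) (φ (p i)))
      = ∑ i, φ (p i ≫ q i ≫ f) := by simp [hφ, map_sum]
    _ = φ f := by simp only [← Category.assoc, ← map_sum, ← Preadditive.sum_comp, hpq,
        Category.id_comp]

end Retract

section Eval

variable (K' : AddCat K)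

lemma evalHom_apply (a : F.obj K') (f : K' ⟶ KO K) : evalHom K F K' a f = F.map f a := rfl

lemma evalHom_add (a b : F.obj K') :
    evalHom K F K' (a + b) = evalHom K F K' a + evalHom K F K' b :=
  LinearMap.ext fun f => map_add (F.map f).hom a b

end Eval

/-- for an additive functor `F` from `add K` to abelian groups and any
`K' ∈ add K`, the map `F(K') → Hom_{Γ(K)}(Hom(K', K), F(K))`, `a ↦ (f ↦ F(f)(a))`,
is an isomorphism (of abelian groups). -/
theorem stmt5 (K' : AddCat K) :
    Function.Bijective (evalHom K F K') ∧
    (∀ a b : F.obj K', evalHom K F K' (a + b) = evalHom K F K' a + evalHom K F K' b) := by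
  obtain ⟨n, p, q, hpq⟩ := AddCat.exists_sum_comp_eq_id K K'
  refine ⟨⟨fun a b hab => ?_, fun φ => ?_⟩, evalHom_add K F K'⟩
  · rw [eq_sum_map_map_of_sum_comp_eq_id F hpq a, eq_sum_map_map_of_sum_comp_eq_id F hpq b]
    simp only [← evalHom_apply, hab]
  · refine ⟨∑ i, F.map (q i) (φ (p i)), LinearMap.ext fun f => ?_⟩
    exact map_sum_map_eq_of_sum_comp_eq_id F hpq φ.toAddMonoidHom (fun f g => φ.map_smul g f) f
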